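/- arXiv:1207.4051 — 2 statements merged into one kernel-verified Lean document; each statement's English description precedes it below -/
import Mathlib

section
/- Let C be an arclength-parametrized soliton with C'' = 𝔭_T(a), a = (α+A)C + v, T = C', and μ = ⟨a/‖a‖, T⟩. Then (d/ds)‖a‖ = ⟨â, (α+A)T⟩, and if μ ≥ 1 - c‖a‖^{-4} with ‖a‖ ≥ 1, then |(d/ds)‖a‖ - α| ≤ √(2c)·‖α+A‖·‖a‖^{-2}. -/
open Matrix
open scoped RealInnerProductSpace

/-!
Along the curve `a' = (α + A) T`, so `‖a‖' = ⟪â, (α + A) T⟫`. Skew-symmetry of `A` and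
`‖T‖ = 1` give `⟪T, (α + A) T⟫ = α`, hence `‖a‖' - α = ⟪â - T, (α + A) T⟫`, and Cauchy–Schwarz
reduces the estimate to `‖â - T‖² = 2 (1 - μ) ≤ 2c ‖a‖⁻⁴`.
-/

section InnerProductSpace

variable {E : Type*} [NormedAddCommGroup E] [InnerProductSpace ℝ E]

theorem HasDerivAt.norm_of_ne_zero {f : ℝ → E} {f' : E} {x : ℝ} (hf : HasDerivAt f f' x)
    (h0 : f x ≠ 0) : HasDerivAt (fun t => ‖f t‖) ⟪‖f x‖⁻¹ • f x, f'⟫ x := by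
  have hsqrt := hf.norm_sq.sqrt (by positivity)
  simp only [Real.sqrt_sq (norm_nonneg _)] at hsqrt
  convert hsqrt using 1
  rw [real_inner_smul_left]
  field_simp

theorem norm_sub_le_sqrt_of_one_sub_le_inner {u w : E} (hu : ‖u‖ = 1) (hw : ‖w‖ = 1) {ε : ℝ}
    (h : 1 - ε ≤ ⟪u, w⟫) : ‖u - w‖ ≤ √(2 * ε) := by
  rw [← Real.sqrt_sq (norm_nonneg (u - w))]
  apply Real.sqrt_le_sqrt
  rw [norm_sub_sq_real, hu, hw]
  linarith

theorem abs_inner_sub_inner_map_le (L : E →L[ℝ] E) (u : E) {w : E} (hw : ‖w‖ = 1) :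
    |⟪u, L w⟫ - ⟪w, L w⟫| ≤ ‖u - w‖ * ‖L‖ := by
  rw [← inner_sub_left]
  calc |⟪u - w, L w⟫| ≤ ‖u - w‖ * ‖L w‖ := abs_real_inner_le_norm _ _
    _ ≤ ‖u - w‖ * ‖L‖ := by
        gcongr
        simpa [hw] using L.le_opNorm w

end InnerProductSpace

theorem Matrix.inner_toEuclideanLin_self_of_transpose_eq_neg {m : Type*} [Fintype m]
    [DecidableEq m] {A : Matrix m m ℝ} (hA : Aᵀ = -A) (x : EuclideanSpace ℝ m) :
    ⟪x, A.toEuclideanLin x⟫ = 0 := by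
  have hadj := LinearMap.adjoint_inner_left A.toEuclideanLin x x
  rw [← toEuclideanLin_conjTranspose_eq_adjoint, conjTranspose_eq_transpose_of_trivial, hA,
    map_neg, LinearMap.neg_apply, inner_neg_left, real_inner_comm] at hadj
  linarith

theorem stmt16_general (n : ℕ) (α : ℝ) (A : Matrix (Fin n) (Fin n) ℝ) (hA : Aᵀ = -A)
    (v : EuclideanSpace ℝ (Fin n)) (c : ℝ)
    (C : ℝ → EuclideanSpace ℝ (Fin n)) (a : ℝ → EuclideanSpace ℝ (Fin n)) (μ : ℝ → ℝ)
    (hCd : ContDiff ℝ 2 C)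
    (harc : ∀ s, ‖deriv C s‖ = 1)
    (ha : ∀ s, a s = α • C s + A.toEuclideanLin (C s) + v)
    (hane : ∀ s, a s ≠ 0)
    (hμ : ∀ s, μ s = ⟪‖a s‖⁻¹ • a s, deriv C s⟫)
    (L : EuclideanSpace ℝ (Fin n) →L[ℝ] EuclideanSpace ℝ (Fin n))
    (hL : L = α • (1 : EuclideanSpace ℝ (Fin n) →L[ℝ] EuclideanSpace ℝ (Fin n))
      + Matrix.toEuclideanCLM (𝕜 := ℝ) A) :
    (∀ s, deriv (fun s' => ‖a s'‖) s
        = ⟪‖a s‖⁻¹ • a s, α • deriv C s + A.toEuclideanLin (deriv C s)⟫) ∧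
    (∀ s, 1 ≤ ‖a s‖ → 1 - c / ‖a s‖ ^ 4 ≤ μ s →
      |deriv (fun s' => ‖a s'‖) s - α| ≤ Real.sqrt (2 * c) * ‖L‖ / ‖a s‖ ^ 2) := by
  have hL_apply : ∀ x, L x = α • x + A.toEuclideanLin x := fun x => by
    simp [hL, ← coe_toEuclideanCLM_eq_toEuclideanLin]
  have hderiv : ∀ s, deriv (fun s' => ‖a s'‖) s = ⟪‖a s‖⁻¹ • a s, L (deriv C s)⟫ := fun s => by
    have ha_deriv : HasDerivAt a (L (deriv C s)) s := by
      rw [show a = fun t => L (C t) + v from funext fun t => by rw [ha, hL_apply]]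
      exact (L.hasFDerivAt.comp_hasDerivAt s
        (hCd.differentiable (by norm_num) s).hasDerivAt).add_const v
    exact (ha_deriv.norm_of_ne_zero (hane s)).deriv
  refine ⟨fun s => by rw [hderiv, hL_apply], fun s _ hμs => ?_⟩
  set T := deriv C s
  set r := ‖a s‖
  have hT : ‖T‖ = 1 := harc s
  have hα : ⟪T, L T⟫ = α := by
    rw [hL_apply, inner_add_right, inner_toEuclideanLin_self_of_transpose_eq_neg hA,
      real_inner_smul_right, real_inner_self_eq_norm_sq, hT]
    ring
  have hclose : ‖r⁻¹ • a s - T‖ ≤ √(2 * c) / r ^ 2 := by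
    calc ‖r⁻¹ • a s - T‖ ≤ √(2 * (c / r ^ 4)) :=
          norm_sub_le_sqrt_of_one_sub_le_inner (norm_smul_inv_norm (hane s)) hT
            (hμ s ▸ hμs)
      _ = √(2 * c) / r ^ 2 := by
          rw [mul_div_assoc', Real.sqrt_div' _ (by positivity), show r ^ 4 = (r ^ 2) ^ 2 by ring,
            Real.sqrt_sq (by positivity)]
  calc |deriv (fun s' => ‖a s'‖) s - α| = |⟪r⁻¹ • a s, L T⟫ - ⟪T, L T⟫| := by rw [hderiv, hα]
    _ ≤ ‖r⁻¹ • a s - T‖ * ‖L‖ := abs_inner_sub_inner_map_le L _ hT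
    _ ≤ √(2 * c) / r ^ 2 * ‖L‖ := by gcongr
    _ = √(2 * c) * ‖L‖ / r ^ 2 := by ring

theorem stmt16 (n : ℕ) (α : ℝ) (A : Matrix (Fin n) (Fin n) ℝ) (hA : Aᵀ = -A)
    (v : EuclideanSpace ℝ (Fin n)) (c : ℝ) (hc : 0 < c)
    (C : ℝ → EuclideanSpace ℝ (Fin n)) (a : ℝ → EuclideanSpace ℝ (Fin n)) (μ : ℝ → ℝ)
    (hCd : ContDiff ℝ 2 C)
    (harc : ∀ s, ‖deriv C s‖ = 1)
    (ha : ∀ s, a s = α • C s + A.toEuclideanLin (C s) + v)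
    (hane : ∀ s, a s ≠ 0)
    (heq : ∀ s, deriv (deriv C) s = a s - ⟪a s, deriv C s⟫ • deriv C s)
    (hμ : ∀ s, μ s = ⟪‖a s‖⁻¹ • a s, deriv C s⟫)
    (L : EuclideanSpace ℝ (Fin n) →L[ℝ] EuclideanSpace ℝ (Fin n))
    (hL : L = α • (1 : EuclideanSpace ℝ (Fin n) →L[ℝ] EuclideanSpace ℝ (Fin n))
      + Matrix.toEuclideanCLM (𝕜 := ℝ) A) :
    (∀ s, deriv (fun s' => ‖a s'‖) s
        = ⟪‖a s‖⁻¹ • a s, α • deriv C s + A.toEuclideanLin (deriv C s)⟫) ∧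
    (∀ s, 1 ≤ ‖a s‖ → 1 - c / ‖a s‖ ^ 4 ≤ μ s →
      |deriv (fun s' => ‖a s'‖) s - α| ≤ Real.sqrt (2 * c) * ‖L‖ / ‖a s‖ ^ 2) :=
  stmt16_general n α A hA v c C a μ hCd harc ha hane hμ L hL
end

section
/- Let C : ℝ → ℝⁿ be arclength-parametrized with C'' = 𝔭_T((α+A)C + v), A antisymmetric, A v = 0, T = C'. Then the quantity V(s) = exp(½α‖C(s)‖² + ⟨v, C(s)⟩)·⟨T(s), A C(s)⟩ satisfies V'(s) = exp(½α‖C(s)‖² + ⟨v, C(s)⟩)·‖𝔭_{T(s)}(A C(s))‖² ≥ 0. -/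
/-!
Write `f = α/2 ‖C‖² + ⟨v, C⟩`, so that `f' = ⟨αC + v, T⟩`, and `g = ⟨T, AC⟩`. Skew-symmetry kills
`⟨T, AT⟩`, so `g' = ⟨C'', AC⟩`, and it also kills `⟨C, AC⟩` and `⟨v, AC⟩ = -⟨Av, C⟩`; hence
`⟨C'', AC⟩ = ‖AC‖² - ⟨αC + AC + v, T⟩⟨T, AC⟩`. In `(e^f g)' = e^f (f' g + g')` the terms
`⟨αC + v, T⟩⟨T, AC⟩` cancel, leaving `e^f (‖AC‖² - ⟨AC, T⟩²) = e^f ‖𝔭_T(AC)‖²` as `‖T‖ = 1`.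
-/

open Matrix
open scoped RealInnerProductSpace

theorem Matrix.inner_toEuclideanLin_of_transpose_eq_neg {m : Type*} [Fintype m] [DecidableEq m]
    {A : Matrix m m ℝ} (hA : Aᵀ = -A) (x y : EuclideanSpace ℝ m) :
    ⟪x, A.toEuclideanLin y⟫ = -⟪A.toEuclideanLin x, y⟫ := by
  rw [← LinearMap.adjoint_inner_left, ← toEuclideanLin_conjTranspose_eq_adjoint,
    conjTranspose_eq_transpose_of_trivial, hA, map_neg, LinearMap.neg_apply, inner_neg_left]

section SkewCurve

variable {E : Type*} [NormedAddCommGroup E] [InnerProductSpace ℝ E]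

theorem inner_apply_self_eq_zero_of_skew {L : E → E} (hL : ∀ x y, ⟪x, L y⟫ = -⟪L x, y⟫)
    (x : E) : ⟪x, L x⟫ = 0 := by
  have h := hL x x
  rw [real_inner_comm x (L x)] at h
  linarith

theorem norm_sub_inner_smul_sq_of_norm_eq_one {T : E} (hT : ‖T‖ = 1) (w : E) :
    ‖w - ⟪w, T⟫ • T‖ ^ 2 = ‖w‖ ^ 2 - ⟪w, T⟫ ^ 2 := by
  rw [norm_sub_sq_real, real_inner_smul_right, norm_smul, Real.norm_eq_abs, hT, mul_one, sq_abs]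
  ring

theorem inner_sub_inner_smul_apply_add_eq_norm_sq {L : E → E}
    (hL : ∀ x y, ⟪x, L y⟫ = -⟪L x, y⟫) {v : E} (hv : L v = 0) {T : E} (hT : ‖T‖ = 1)
    (α : ℝ) (c : E) :
    ⟪(α • c + L c + v) - ⟪α • c + L c + v, T⟫ • T, L c⟫ + ⟪α • c + v, T⟫ * ⟪T, L c⟫
      = ‖L c - ⟪L c, T⟫ • T‖ ^ 2 := by
  have hcc : ⟪c, L c⟫ = 0 := inner_apply_self_eq_zero_of_skew hL c
  have hvc : ⟪v, L c⟫ = 0 := by rw [hL, hv, inner_zero_left, neg_zero]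
  rw [norm_sub_inner_smul_sq_of_norm_eq_one hT, ← real_inner_self_eq_norm_sq]
  simp only [inner_sub_left, inner_add_left, real_inner_smul_left, hcc, hvc]
  rw [real_inner_comm (L c) T]
  ring

variable {C γ : ℝ → E} {s : ℝ}

theorem HasDerivAt.half_mul_norm_sq_add_inner {T : E} (hC : HasDerivAt C T s) (α : ℝ) (v : E) :
    HasDerivAt (fun t => α / 2 * ‖C t‖ ^ 2 + ⟪v, C t⟫) ⟪α • C s + v, T⟫ s := by
  refine ((hC.norm_sq.const_mul (α / 2)).add ((hasDerivAt_const s v).inner ℝ hC)).congr_deriv ?_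
  rw [inner_add_left, real_inner_smul_left, inner_zero_left]
  ring

theorem HasDerivAt.inner_apply_of_skew {L : E →L[ℝ] E} (hL : ∀ x y, ⟪x, L y⟫ = -⟪L x, y⟫)
    (hC : HasDerivAt C (γ s) s) {γ' : E} (hγ : HasDerivAt γ γ' s) :
    HasDerivAt (fun t => ⟪γ t, L (C t)⟫) ⟪γ', L (C s)⟫ s := by
  refine (hγ.inner ℝ (L.hasFDerivAt.comp_hasDerivAt s hC)).congr_deriv ?_
  rw [inner_apply_self_eq_zero_of_skew hL, zero_add, Function.comp_apply]

theorem hasDerivAt_exp_mul_inner_apply_of_skew {L : E →L[ℝ] E}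
    (hL : ∀ x y, ⟪x, L y⟫ = -⟪L x, y⟫) {v : E} (hv : L v = 0) (α : ℝ)
    (hC : HasDerivAt C (γ s) s) (hunit : ‖γ s‖ = 1)
    (hγ : HasDerivAt γ ((α • C s + L (C s) + v) - ⟪α • C s + L (C s) + v, γ s⟫ • γ s) s) :
    HasDerivAt (fun t => Real.exp (α / 2 * ‖C t‖ ^ 2 + ⟪v, C t⟫) * ⟪γ t, L (C t)⟫)
      (Real.exp (α / 2 * ‖C s‖ ^ 2 + ⟪v, C s⟫) * ‖L (C s) - ⟪L (C s), γ s⟫ • γ s‖ ^ 2) s := by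
  refine (((hC.half_mul_norm_sq_add_inner α v).exp).mul
    (hC.inner_apply_of_skew hL hγ)).congr_deriv ?_
  rw [← inner_sub_inner_smul_apply_add_eq_norm_sq hL hv hunit α (C s)]
  ring

end SkewCurve

theorem stmt17 (n : ℕ) (α : ℝ) (A : Matrix (Fin n) (Fin n) ℝ) (hA : Aᵀ = -A)
    (v : EuclideanSpace ℝ (Fin n)) (hv : A.toEuclideanLin v = 0)
    (C : ℝ → EuclideanSpace ℝ (Fin n))
    (hC : ContDiff ℝ 2 C)
    (harc : ∀ s, ‖deriv C s‖ = 1)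
    (heq : ∀ s, deriv (deriv C) s
      = (α • C s + A.toEuclideanLin (C s) + v)
        - ⟪α • C s + A.toEuclideanLin (C s) + v, deriv C s⟫ • deriv C s)
    (V : ℝ → ℝ)
    (hV : ∀ s, V s = Real.exp (α / 2 * ‖C s‖ ^ 2 + ⟪v, C s⟫)
      * ⟪deriv C s, A.toEuclideanLin (C s)⟫) :
    ∀ s, deriv V s = Real.exp (α / 2 * ‖C s‖ ^ 2 + ⟪v, C s⟫)
        * ‖A.toEuclideanLin (C s)
            - ⟪A.toEuclideanLin (C s), deriv C s⟫ • deriv C s‖ ^ 2 ∧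
      0 ≤ deriv V s := by
  intro s
  obtain ⟨hCdiff, -, hTsmooth⟩ := (contDiff_succ_iff_deriv (n := 1)).1 hC
  have hTdiff : Differentiable ℝ (deriv C) := hTsmooth.differentiable one_ne_zero
  have hV' : V = fun t => Real.exp (α / 2 * ‖C t‖ ^ 2 + ⟪v, C t⟫)
      * ⟪deriv C t, A.toEuclideanLin.toContinuousLinearMap (C t)⟫ := funext hV
  have hderiv := (hasDerivAt_exp_mul_inner_apply_of_skew
    (L := A.toEuclideanLin.toContinuousLinearMap) (inner_toEuclideanLin_of_transpose_eq_neg hA)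
    hv α (hCdiff s).hasDerivAt (harc s) (heq s ▸ (hTdiff s).hasDerivAt)).deriv
  rw [← hV'] at hderiv
  exact ⟨hderiv, hderiv ▸ by positivity⟩
end
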